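/- arXiv:2509.05676 — 4 statements merged into one kernel-verified Lean document; each statement's English description precedes it below -/
import Mathlib

section
/- As the carbon aversion α_1 → ∞ (with c_1 > 0 fixed), the optimal two-asset weights converge: π*_1(α_1) → 0 and π*_2(α_1) → (μ_2 − r)/(δ σ_2^2); that is, the carbon-intensive asset is fully divested in the limit. -/
open Matrix Filter

/-- Limit of a linear-fractional function at infinity. -/
lemma linfrac_tendsto (a b c d : ℝ) (hd : 0 < d) :
    Tendsto (fun α : ℝ => (a + b * α) / (c + d * α)) atTop (nhds (b / d)) := by
  have h1 : Tendsto (fun α : ℝ => (a / α + b) / (c / α + d)) atTop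
      (nhds ((0 + b) / (0 + d))) := by
    apply Tendsto.div
    · exact (tendsto_const_nhds.div_atTop tendsto_id).add tendsto_const_nhds
    · exact (tendsto_const_nhds.div_atTop tendsto_id).add tendsto_const_nhds
    · positivity
  have h2 : (0 + b) / (0 + d) = b / d := by ring_nf
  rw [h2] at h1
  apply h1.congr'
  filter_upwards [eventually_gt_atTop 0] with α hα
  have hα0 : α ≠ 0 := ne_of_gt hα
  rw [show a / α + b = (a + b * α) / α by field_simp,
    show c / α + d = (c + d * α) / α by field_simp, div_div_div_eq,
    mul_comm (a + b * α) α, mul_div_mul_left _ _ hα0]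

/-- As the carbon aversion `α1 → ∞` (with `c1 > 0` fixed), the optimal
two-asset weights converge: `π*₁(α1) → 0` and `π*₂(α1) → (μ2 − r)/(δσ2²)`. -/
theorem two_asset_full_divestment_limit
    (δ r μ1 μ2 σ1 σ2 ρ c1 : ℝ)
    (hδ : 0 < δ) (hσ1 : 0 < σ1) (hσ2 : 0 < σ2) (hρ : -1 < ρ ∧ ρ < 1) (hc : 0 < c1)
    (πstar : ℝ → Fin 2 → ℝ)
    (hπ : πstar = fun α1 =>
      (δ • !![σ1 ^ 2, ρ * σ1 * σ2; ρ * σ1 * σ2, σ2 ^ 2]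
        + Matrix.diagonal ![α1 * c1 * σ1 ^ 2, 0])⁻¹ *ᵥ ![μ1 - r, μ2 - r]) :
    Tendsto (fun α1 => πstar α1 0) atTop (nhds 0)
    ∧ Tendsto (fun α1 => πstar α1 1) atTop (nhds ((μ2 - r) / (δ * σ2 ^ 2))) := by
  have hρ2 : ρ ^ 2 < 1 := by
    have := abs_lt.mpr hρ
    nlinarith [abs_nonneg ρ, sq_abs ρ]
  -- the denominator
  set D : ℝ → ℝ := fun α => δ * σ1 ^ 2 * σ2 ^ 2 * (δ * (1 - ρ ^ 2) + α * c1) with hD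
  have hDpos : ∀ α : ℝ, 0 < α → 0 < D α := by
    intro α hα
    have : 0 < δ * (1 - ρ ^ 2) + α * c1 := by nlinarith
    positivity
  -- explicit solution
  set v : ℝ → Fin 2 → ℝ := fun α =>
    ![(δ * σ2 ^ 2 * (μ1 - r) - δ * ρ * σ1 * σ2 * (μ2 - r)) / D α,
      ((δ + α * c1) * σ1 ^ 2 * (μ2 - r) - δ * ρ * σ1 * σ2 * (μ1 - r)) / D α] with hv
  have key : ∀ α : ℝ, 0 < α → πstar α = v α := by
    intro α hα
    set M : Matrix (Fin 2) (Fin 2) ℝ :=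
      δ • !![σ1 ^ 2, ρ * σ1 * σ2; ρ * σ1 * σ2, σ2 ^ 2]
        + Matrix.diagonal ![α * c1 * σ1 ^ 2, 0] with hM
    have hMeq : M = !![δ * σ1 ^ 2 + α * c1 * σ1 ^ 2, δ * (ρ * σ1 * σ2);
        δ * (ρ * σ1 * σ2), δ * σ2 ^ 2] := by
      ext i j
      fin_cases i <;> fin_cases j <;>
        simp [hM, Matrix.diagonal, Matrix.vecHead, Matrix.vecTail, Matrix.smul_apply] <;> ring
    have hdet : M.det = D α := by
      rw [hMeq, Matrix.det_fin_two_of, hD]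
      ring
    have hdet0 : M.det ≠ 0 := by rw [hdet]; exact (hDpos α hα).ne'
    have hD0 : D α ≠ 0 := (hDpos α hα).ne'
    have hMv : M *ᵥ v α = ![μ1 - r, μ2 - r] := by
      rw [hMeq]
      ext i
      fin_cases i <;>
        · simp [hv, Matrix.mulVec, dotProduct, Fin.sum_univ_two]
          field_simp
          rw [hD]; ring
    have : πstar α = M⁻¹ *ᵥ (M *ᵥ v α) := by rw [hπ, hMv]
    rw [this, Matrix.mulVec_mulVec, Matrix.nonsing_inv_mul M (Ne.isUnit hdet0), Matrix.one_mulVec]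
  have hev : ∀ᶠ α in atTop, πstar α = v α := by
    filter_upwards [eventually_gt_atTop 0] with α hα using key α hα
  constructor
  · have h0 : Tendsto (fun α => v α 0) atTop (nhds 0) := by
      have := linfrac_tendsto
        (δ * σ2 ^ 2 * (μ1 - r) - δ * ρ * σ1 * σ2 * (μ2 - r)) 0
        (δ * σ1 ^ 2 * σ2 ^ 2 * (δ * (1 - ρ ^ 2)))
        (δ * σ1 ^ 2 * σ2 ^ 2 * c1) (by positivity)
      simp only [zero_mul, add_zero, zero_div] at this
      apply this.congr
      intro α
      simp only [hv, hD, Matrix.cons_val_zero, Matrix.cons_val_one, Matrix.head_cons]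
      ring_nf
    apply h0.congr'
    filter_upwards [hev] with α h using (congrFun h 0).symm
  · have h1 : Tendsto (fun α => v α 1) atTop (nhds ((μ2 - r) / (δ * σ2 ^ 2))) := by
      have := linfrac_tendsto
        (δ * σ1 ^ 2 * (μ2 - r) - δ * ρ * σ1 * σ2 * (μ1 - r))
        (c1 * σ1 ^ 2 * (μ2 - r))
        (δ * σ1 ^ 2 * σ2 ^ 2 * (δ * (1 - ρ ^ 2)))
        (δ * σ1 ^ 2 * σ2 ^ 2 * c1) (by positivity)
      have heq : c1 * σ1 ^ 2 * (μ2 - r) / (δ * σ1 ^ 2 * σ2 ^ 2 * c1)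
          = (μ2 - r) / (δ * σ2 ^ 2) := by
        rw [div_eq_div_iff (by positivity) (by positivity)]; ring
      rw [heq] at this
      apply this.congr
      intro α
      simp only [hv, hD, Matrix.cons_val_zero, Matrix.cons_val_one, Matrix.head_cons]
      ring_nf
    apply h1.congr'
    filter_upwards [hev] with α h using (congrFun h 1).symm
end

section
/- Let φ(t,c) be a classical solution of ∂_t φ + L^C φ + H(t,c)φ = 0, φ(T,c) = 1, where H(t,c) = (1−δ)[r + (1/2)(μ−r1)^T(δΣΣ^T + e(t,c)⊙DD^T)^{−1}(μ−r1)], δ ∈ (0,1)∪(1,∞). Then w(t,x,c) = x^{1−δ}/(1−δ)·φ(t,c) solves the HJB equation sup_π{∂_t w + L^π w} = 0 with terminal condition w(T,x,c) = x^{1−δ}/(1−δ), and the supremum is attained at π*(t,c) = (δΣΣ^T + e(t,c)⊙DD^T)^{−1}(μ−r1). -/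
open Matrix

lemma quad_aux {d : ℕ} (A : Matrix (Fin d) (Fin d) ℝ) (hA : A.PosDef)
    (b p : Fin d → ℝ) (hp : A *ᵥ p = b) (π : Fin d → ℝ) :
    π ⬝ᵥ b - (1/2) * (π ⬝ᵥ (A *ᵥ π)) - (1/2) * (b ⬝ᵥ p) ≤ 0 := by
  have hsym : Aᵀ = A := (by simpa using hA.1 : A.IsSymm).eq
  have h1 : p ⬝ᵥ (A *ᵥ π) = b ⬝ᵥ π := by
    rw [Matrix.dotProduct_mulVec, ← Matrix.mulVec_transpose, hsym, hp]
  have h2 : π ⬝ᵥ (A *ᵥ p) = π ⬝ᵥ b := by rw [hp]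
  have h3 : p ⬝ᵥ (A *ᵥ p) = b ⬝ᵥ p := by rw [hp, dotProduct_comm]
  have hq : 0 ≤ (π - p) ⬝ᵥ (A *ᵥ (π - p)) := by simpa using hA.posSemidef.dotProduct_mulVec_nonneg (π - p)
  have hexp : (π - p) ⬝ᵥ (A *ᵥ (π - p))
      = π ⬝ᵥ (A *ᵥ π) - π ⬝ᵥ (A *ᵥ p) - p ⬝ᵥ (A *ᵥ π) + p ⬝ᵥ (A *ᵥ p) := by
    rw [Matrix.mulVec_sub, sub_dotProduct, dotProduct_sub, dotProduct_sub]; ring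
  have hbπ : b ⬝ᵥ π = π ⬝ᵥ b := dotProduct_comm _ _
  rw [hexp, h1, h2, h3, hbπ] at hq
  linarith


/-- CRRA case: if `φ > 0` solves `∂_tφ + L^Cφ + H(t,c)φ = 0`, `φ(T,c)=1`,
with `H(t,c) = (1−δ)[r + (1/2)(μ−r1)ᵀ(δΣΣᵀ + e⊙DDᵀ)⁻¹(μ−r1)]`, then
`w(t,x,c) = x^{1−δ}/(1−δ)·φ(t,c)` solves the HJB equation
`sup_π {∂_t w + L^π w} = 0` with terminal condition `x^{1−δ}/(1−δ)`, the supremum being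
attained at `π*(t,c) = (δΣΣᵀ + e⊙DDᵀ)⁻¹(μ−r1)`.  Here `Ψ π t x c = (∂_t w + L^π w)(t,x,c)`
is written out with `L^π w = x[r + πᵀb − ½πᵀEπ]∂_x w + (x²/2)πᵀΣΣᵀπ ∂²_x w + L^C w`. -/
theorem hjb_solution_crra
    (d : ℕ) (T r δ : ℝ) (hT : 0 < T) (hδ0 : 0 < δ) (hδ1 : δ ≠ 1)
    (μv σv : Fin d → ℝ) (hσ : ∀ i, 0 < σv i)
    (Sg : Matrix (Fin d) (Fin d) ℝ) (hpos : (Sg * Sgᵀ).PosDef)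
    (D : Set (Fin d → ℝ))
    (e : ℝ → (Fin d → ℝ) → Fin d → ℝ) (he : ∀ t c i, 0 ≤ e t c i)
    (E : ℝ → (Fin d → ℝ) → Matrix (Fin d) (Fin d) ℝ)
    (hE : E = fun t c => Matrix.diagonal (fun i => e t c i * (σv i) ^ 2))
    (b : Fin d → ℝ) (hb : b = fun i => μv i - r)
    -- the generator of C, acting linearly on functions of c:
    (LC : ((Fin d → ℝ) → ℝ) → (Fin d → ℝ) → ℝ)
    (hLClin : ∀ (k : ℝ) (f : (Fin d → ℝ) → ℝ) (c : Fin d → ℝ),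
      LC (fun c' => k * f c') c = k * LC f c)
    (H : ℝ → (Fin d → ℝ) → ℝ)
    (hH : H = fun t c =>
      (1 - δ) * (r + (1 / 2) * (b ⬝ᵥ ((δ • (Sg * Sgᵀ) + E t c)⁻¹ *ᵥ b))))
    (φ dφ : ℝ → (Fin d → ℝ) → ℝ) (hφpos : ∀ t c, 0 < φ t c)
    (hderiv : ∀ t ∈ Set.Ico (0:ℝ) T, ∀ c ∈ D, HasDerivAt (fun s => φ s c) (dφ t c) t)
    (hPDE : ∀ t ∈ Set.Ico (0:ℝ) T, ∀ c ∈ D, dφ t c + LC (φ t) c + H t c * φ t c = 0)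
    (hφT : ∀ c ∈ D, φ T c = 1)
    (w : ℝ → ℝ → (Fin d → ℝ) → ℝ)
    (hw : w = fun t x c => x ^ (1 - δ) / (1 - δ) * φ t c)
    -- `Ψ π t x c = ∂_t w + L^π w` at `(t,x,c)`:
    (Ψ : (Fin d → ℝ) → ℝ → ℝ → (Fin d → ℝ) → ℝ)
    (hΨ : Ψ = fun π t x c =>
      x ^ (1 - δ) / (1 - δ) * dφ t c
      + x * (r + π ⬝ᵥ b - (1 / 2) * (π ⬝ᵥ (E t c *ᵥ π))) * deriv (fun y => w t y c) x
      + x ^ 2 / 2 * (π ⬝ᵥ ((Sg * Sgᵀ) *ᵥ π)) * deriv (deriv (fun y => w t y c)) x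
      + LC (fun c' => w t x c') c)
    (πstar : ℝ → (Fin d → ℝ) → Fin d → ℝ)
    (hπ : πstar = fun t c => (δ • (Sg * Sgᵀ) + E t c)⁻¹ *ᵥ b) :
    ∀ t ∈ Set.Ico (0:ℝ) T, ∀ x > (0:ℝ), ∀ c ∈ D,
      (∀ π : Fin d → ℝ, Ψ π t x c ≤ Ψ (πstar t c) t x c)
      ∧ Ψ (πstar t c) t x c = 0
      ∧ w T x c = x ^ (1 - δ) / (1 - δ) := by
  intro t ht x hx c hc
  have hδne : (1:ℝ) - δ ≠ 0 := sub_ne_zero.mpr (Ne.symm hδ1)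
  set S : Matrix (Fin d) (Fin d) ℝ := Sg * Sgᵀ with hS
  set A : Matrix (Fin d) (Fin d) ℝ := δ • S + E t c with hA
  -- positive definiteness of A
  have hSsmul : (δ • S).PosDef := by
    refine Matrix.PosDef.of_dotProduct_mulVec_pos ?_ ?_
    · have h1 : Sᴴ = S := hpos.1
      show (δ • S)ᴴ = δ • S
      rw [Matrix.conjTranspose_smul, h1]
      norm_num
    · intro v hv
      have := hpos.dotProduct_mulVec_pos hv
      simpa [Matrix.smul_mulVec, dotProduct_smul] using mul_pos hδ0 this
  have hEpsd : (E t c).PosSemidef := by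
    rw [hE]
    exact Matrix.posSemidef_diagonal_iff.mpr fun i =>
      mul_nonneg (he t c i) (sq_nonneg _)
  have hApos : A.PosDef := hSsmul.add_posSemidef hEpsd
  have hAdet : IsUnit A.det := isUnit_iff_ne_zero.mpr hApos.det_pos.ne'
  set p : Fin d → ℝ := πstar t c with hpdef
  have hp : A *ᵥ p = b := by
    rw [hpdef, hπ]
    show A *ᵥ ((δ • S + E t c)⁻¹ *ᵥ b) = b
    rw [← hA, Matrix.mulVec_mulVec, Matrix.mul_nonsing_inv A hAdet, Matrix.one_mulVec]
  -- derivatives in x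
  have hg : ∀ y : ℝ, y ≠ 0 → HasDerivAt (fun z : ℝ => z ^ (1 - δ) / (1 - δ) * φ t c)
      (y ^ (-δ) * φ t c) y := by
    intro y hy
    have h1 := ((Real.hasDerivAt_rpow_const (x := y) (p := 1 - δ)
      (Or.inl hy)).div_const (1 - δ)).mul_const (φ t c)
    have h2 : (1 - δ) * y ^ (1 - δ - 1) / (1 - δ) * φ t c = y ^ (-δ) * φ t c := by
      rw [show (1 - δ - 1) = -δ by ring]
      field_simp
    rwa [h2] at h1
  have hd1 : deriv (fun y => w t y c) x = x ^ (-δ) * φ t c := by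
    rw [hw]; exact (hg x hx.ne').deriv
  have hev : deriv (fun y => w t y c) =ᶠ[nhds x] (fun y : ℝ => y ^ (-δ) * φ t c) := by
    filter_upwards [lt_mem_nhds hx] with y hy
    rw [hw]; exact (hg y hy.ne').deriv
  have hd2 : deriv (deriv (fun y => w t y c)) x = -δ * x ^ (-δ - 1) * φ t c := by
    rw [hev.deriv_eq]
    exact ((Real.hasDerivAt_rpow_const (x := x) (p := -δ)
      (Or.inl hx.ne')).mul_const (φ t c)).deriv
  -- power算術
  have hx1 : x * x ^ (-δ) = x ^ (1 - δ) := by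
    rw [show (1:ℝ) - δ = 1 + (-δ) by ring, Real.rpow_add hx, Real.rpow_one]
  have hx2 : x ^ 2 * x ^ (-δ - 1) = x ^ (1 - δ) := by
    rw [show (1:ℝ) - δ = 2 + (-δ - 1) by ring, Real.rpow_add hx,
      show (2:ℝ) = ((2:ℕ):ℝ) by norm_num, Real.rpow_natCast]
  -- the LC term
  have hLC : LC (fun c' => w t x c') c = x ^ (1 - δ) / (1 - δ) * LC (φ t) c := by
    rw [hw]; exact hLClin _ _ _
  -- PDE rewritten
  have hpde : dφ t c + LC (φ t) c
      = -((1 - δ) * (r + (1 / 2) * (b ⬝ᵥ p)) * φ t c) := by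
    have h0 := hPDE t ht c hc
    have hHe : H t c = (1 - δ) * (r + (1 / 2) * (b ⬝ᵥ p)) := by
      rw [hH, hpdef, hπ]
    rw [hHe] at h0
    linarith
  -- general value of Ψ
  have hΨval : ∀ π : Fin d → ℝ, Ψ π t x c
      = x ^ (1 - δ) * φ t c
        * (π ⬝ᵥ b - (1/2) * (π ⬝ᵥ (A *ᵥ π)) - (1/2) * (b ⬝ᵥ p)) := by
    intro π
    have hAπ : π ⬝ᵥ (A *ᵥ π) = δ * (π ⬝ᵥ (S *ᵥ π)) + π ⬝ᵥ (E t c *ᵥ π) := by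
      rw [hA, Matrix.add_mulVec, dotProduct_add, Matrix.smul_mulVec,
        dotProduct_smul]
      simp
    rw [hΨ]
    simp only []
    rw [hd1, hd2, hLC, hAπ]
    have e1 : x * (r + π ⬝ᵥ b - (1 / 2) * (π ⬝ᵥ (E t c *ᵥ π))) * (x ^ (-δ) * φ t c)
        = x ^ (1 - δ) * φ t c * (r + π ⬝ᵥ b - (1 / 2) * (π ⬝ᵥ (E t c *ᵥ π))) := by
      rw [← hx1]; ring
    have e2 : x ^ 2 / 2 * (π ⬝ᵥ (S *ᵥ π)) * (-δ * x ^ (-δ - 1) * φ t c)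
        = x ^ (1 - δ) * φ t c * (-(δ / 2) * (π ⬝ᵥ (S *ᵥ π))) := by
      rw [← hx2]; ring
    have e3 : x ^ (1 - δ) / (1 - δ) * dφ t c + x ^ (1 - δ) / (1 - δ) * LC (φ t) c
        = -(x ^ (1 - δ) * φ t c * (r + (1 / 2) * (b ⬝ᵥ p))) := by
      rw [show x ^ (1 - δ) / (1 - δ) * dφ t c + x ^ (1 - δ) / (1 - δ) * LC (φ t) c
        = x ^ (1 - δ) / (1 - δ) * (dφ t c + LC (φ t) c) by ring, hpde]
      field_simp
    rw [e1, e2]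
    linear_combination e3
  have hzero : p ⬝ᵥ b - (1/2) * (p ⬝ᵥ (A *ᵥ p)) - (1/2) * (b ⬝ᵥ p) = 0 := by
    rw [hp, dotProduct_comm b p]; ring
  have hX : 0 < x ^ (1 - δ) * φ t c :=
    mul_pos (Real.rpow_pos_of_pos hx _) (hφpos t c)
  refine ⟨fun π => ?_, ?_, ?_⟩
  · rw [hΨval π, hΨval p, hzero, mul_zero]
    nlinarith [quad_aux A hApos b p hp π, hX]
  · rw [hΨval p, hzero, mul_zero]
  · rw [hw]
    show x ^ (1 - δ) / (1 - δ) * φ T c = x ^ (1 - δ) / (1 - δ)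
    rw [hφT c hc, mul_one]
end

section
/- For the logarithmic utility (δ = 1), if φ(t,c) solves ∂_t φ + L^C φ = f(t,c) with φ(T,c) = 0, where f(t,c) = −[r + (1/2)(μ−r1)^T (ΣΣ^T + e(t,c)⊙DD^T)^{−1}(μ−r1)], then w(t,x,c) = log(x) + φ(t,c) solves the HJB equation with terminal condition log(x), and the maximizer is π*(t,c) = (ΣΣ^T + e(t,c)⊙DD^T)^{−1}(μ−r1). -/
open Matrix

/-- logarithmic case, δ = 1: if `φ` solves `∂_tφ + L^Cφ = f(t,c)`,
`φ(T,c) = 0`, with `f(t,c) = −[r + (1/2)(μ−r1)ᵀ(ΣΣᵀ + e⊙DDᵀ)⁻¹(μ−r1)]`, then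
`w(t,x,c) = log(x) + φ(t,c)` solves the HJB equation with terminal condition `log x`,
and the maximizer is `π*(t,c) = (ΣΣᵀ + e⊙DDᵀ)⁻¹(μ−r1)`.  Here
`Ψ π t x c = (∂_t w + L^π w)(t,x,c)`. -/
theorem hjb_solution_log
    (d : ℕ) (T r : ℝ) (hT : 0 < T)
    (μv σv : Fin d → ℝ) (hσ : ∀ i, 0 < σv i)
    (Sg : Matrix (Fin d) (Fin d) ℝ) (hpos : (Sg * Sgᵀ).PosDef)
    (D : Set (Fin d → ℝ))
    (e : ℝ → (Fin d → ℝ) → Fin d → ℝ) (he : ∀ t c i, 0 ≤ e t c i)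
    (E : ℝ → (Fin d → ℝ) → Matrix (Fin d) (Fin d) ℝ)
    (hE : E = fun t c => Matrix.diagonal (fun i => e t c i * (σv i) ^ 2))
    (b : Fin d → ℝ) (hb : b = fun i => μv i - r)
    (LC : ((Fin d → ℝ) → ℝ) → (Fin d → ℝ) → ℝ)
    (f : ℝ → (Fin d → ℝ) → ℝ)
    (hf : f = fun t c => -(r + (1 / 2) * (b ⬝ᵥ (((Sg * Sgᵀ) + E t c)⁻¹ *ᵥ b))))
    (φ dφ : ℝ → (Fin d → ℝ) → ℝ)
    (hderiv : ∀ t ∈ Set.Ico (0:ℝ) T, ∀ c ∈ D, HasDerivAt (fun s => φ s c) (dφ t c) t)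
    (hPDE : ∀ t ∈ Set.Ico (0:ℝ) T, ∀ c ∈ D, dφ t c + LC (φ t) c = f t c)
    (hφT : ∀ c ∈ D, φ T c = 0)
    (w : ℝ → ℝ → (Fin d → ℝ) → ℝ)
    (hw : w = fun t x c => Real.log x + φ t c)
    -- `Ψ π t x c = ∂_t w + L^π w` at `(t,x,c)`:
    (Ψ : (Fin d → ℝ) → ℝ → ℝ → (Fin d → ℝ) → ℝ)
    (hΨ : Ψ = fun π t x c =>
      dφ t c
      + x * (r + π ⬝ᵥ b - (1 / 2) * (π ⬝ᵥ (E t c *ᵥ π))) * deriv (fun y => w t y c) x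
      + x ^ 2 / 2 * (π ⬝ᵥ ((Sg * Sgᵀ) *ᵥ π)) * deriv (deriv (fun y => w t y c)) x
      + LC (φ t) c)
    (πstar : ℝ → (Fin d → ℝ) → Fin d → ℝ)
    (hπ : πstar = fun t c => ((Sg * Sgᵀ) + E t c)⁻¹ *ᵥ b) :
    ∀ t ∈ Set.Ico (0:ℝ) T, ∀ x > (0:ℝ), ∀ c ∈ D,
      (∀ π : Fin d → ℝ, Ψ π t x c ≤ Ψ (πstar t c) t x c)
      ∧ Ψ (πstar t c) t x c = 0
      ∧ w T x c = Real.log x := by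

  intro t ht x hx c hc
  -- The matrix A = ΣΣᵀ + E t c is positive definite
  set A : Matrix (Fin d) (Fin d) ℝ := (Sg * Sgᵀ) + E t c with hA
  have hEpsd : (E t c).PosSemidef := by
    rw [hE]
    exact Matrix.PosSemidef.diagonal fun i => mul_nonneg (he t c i) (sq_nonneg _)
  have hApos : A.PosDef := hpos.add_posSemidef hEpsd
  have hdet : IsUnit A.det := isUnit_iff_ne_zero.mpr hApos.det_pos.ne'
  set πs : Fin d → ℝ := πstar t c with hπs
  have hAb : A *ᵥ πs = b := by
    rw [hπs, hπ]
    simp only [← hA, Matrix.mulVec_mulVec, Matrix.mul_nonsing_inv _ hdet, Matrix.one_mulVec]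
  have hsymT : Aᵀ = A := by
    have := hApos.isHermitian
    rwa [Matrix.IsHermitian, Matrix.conjTranspose_eq_transpose_of_trivial] at this
  have hsym : ∀ u v : Fin d → ℝ, u ⬝ᵥ (A *ᵥ v) = v ⬝ᵥ (A *ᵥ u) := by
    intro u v
    rw [Matrix.dotProduct_mulVec, ← Matrix.mulVec_transpose, hsymT, dotProduct_comm]
  have hnn : ∀ v : Fin d → ℝ, 0 ≤ v ⬝ᵥ (A *ᵥ v) := by
    intro v
    simpa using hApos.posSemidef.dotProduct_mulVec_nonneg v
  -- derivatives of w in x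
  have hd1 : deriv (fun y => w t y c) = fun y : ℝ => y⁻¹ := by
    funext y
    rw [hw]
    simp only
    rw [deriv_add_const, Real.deriv_log]
  have hd2 : deriv (fun y : ℝ => y⁻¹) x = -(x ^ 2)⁻¹ := deriv_inv
  have hxne : x ≠ 0 := hx.ne'
  -- simplified form of Ψ
  have hΨ' : ∀ π : Fin d → ℝ, Ψ π t x c =
      dφ t c + LC (φ t) c + r + π ⬝ᵥ b - (1 / 2) * (π ⬝ᵥ (A *ᵥ π)) := by
    intro π
    rw [hΨ]
    simp only [hd1, hd2, hA, Matrix.add_mulVec, dotProduct_add]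
    field_simp
    ring
  have hPDEtc := hPDE t ht c hc
  rw [hf] at hPDEtc
  simp only at hPDEtc
  have hbπs : b ⬝ᵥ (((Sg * Sgᵀ) + E t c)⁻¹ *ᵥ b) = πs ⬝ᵥ b := by
    rw [hπs, hπ, dotProduct_comm]
  rw [hbπs] at hPDEtc
  have hΨstar : Ψ πs t x c = 0 := by
    rw [hΨ' πs, hAb]
    linarith [hPDEtc]
  refine ⟨fun π => ?_, hΨstar, ?_⟩
  · rw [hΨ' π, hΨ' πs]
    have hkey : 0 ≤ (π - πs) ⬝ᵥ (A *ᵥ (π - πs)) := hnn _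
    rw [Matrix.mulVec_sub, dotProduct_sub, sub_dotProduct,
      sub_dotProduct] at hkey
    have h1 : π ⬝ᵥ b = π ⬝ᵥ (A *ᵥ πs) := by rw [hAb]
    have h2 : πs ⬝ᵥ b = πs ⬝ᵥ (A *ᵥ πs) := by rw [hAb]
    have h3 := hsym π πs
    nlinarith [hkey]
  · rw [hw]
    simp only
    rw [hφT c hc, add_zero]
end

section
/- Let F be standard Gaussian, v > 0, x, k, K > 0 with k ≤ K, r, T ≥ 0, and set X = x·exp(rT − v/2 + √v·F). Then E[min(K, max(k, X))] = k·Φ(a(k)) + K·Φ(−a(K)) + x e^{rT}(Φ(b(K)) − Φ(b(k))), where a(y) = (log(y/x) − rT + v/2)/√v, b(y) = a(y) − √v, and Φ is the standard normal cdf. -/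
open MeasureTheory ProbabilityTheory
open scoped ENNReal NNReal

/-- For `F` standard Gaussian and `X = x·exp(rT − v/2 + √v·F)` (lognormal),
`E[min(K, max(k, X))] = k·Φ(a(k)) + K·Φ(−a(K)) + x e^{rT}(Φ(b(K)) − Φ(b(k)))`, where
`a(y) = (log(y/x) − rT + v/2)/√v`, `b(y) = a(y) − √v`, `Φ` the standard normal cdf. -/
theorem lognormal_capped_floored_expectation
    (v x k K r T : ℝ) (hv : 0 < v) (hx : 0 < x) (hk : 0 < k) (hkK : k ≤ K)
    (hr : 0 ≤ r) (hT : 0 ≤ T)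
    (Φ : ℝ → ℝ) (hΦ : Φ = fun y => ((gaussianReal 0 1) (Set.Iic y)).toReal)
    (a b : ℝ → ℝ)
    (ha : a = fun y => (Real.log (y / x) - r * T + v / 2) / Real.sqrt v)
    (hb : b = fun y => a y - Real.sqrt v) :
    ∫ z, min K (max k (x * Real.exp (r * T - v / 2 + Real.sqrt v * z)))
        ∂(gaussianReal 0 1)
      = k * Φ (a k) + K * Φ (-(a K))
        + x * Real.exp (r * T) * (Φ (b K) - Φ (b k)) := by
  have hK : 0 < K := hk.trans_le hkK
  simp only [hΦ, ha, hb]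
  set sv := Real.sqrt v with hsv
  have hsv0 : 0 < sv := Real.sqrt_pos.2 hv
  have hsv2 : sv * sv = v := Real.mul_self_sqrt hv.le
  set A := (Real.log (k / x) - r * T + v / 2) / sv with hA
  set B := (Real.log (K / x) - r * T + v / 2) / sv with hB
  have hAB : A ≤ B := by
    rw [hA, hB]
    gcongr

  -- threshold equivalence
  have key : ∀ y : ℝ, 0 < y → ∀ z : ℝ,
      (x * Real.exp (r * T - v / 2 + sv * z) ≤ y ↔
        z ≤ (Real.log (y / x) - r * T + v / 2) / sv) := by
    intro y hy z
    rw [mul_comm, ← le_div_iff₀ hx, ← Real.le_log_iff_exp_le (by positivity),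
      le_div_iff₀ hsv0]
    constructor <;> intro h <;> nlinarith
  have pdf_nonneg : ∀ z, 0 ≤ gaussianPDFReal 0 1 z := gaussianPDFReal_nonneg 0 1
  have pdf_int : Integrable (gaussianPDFReal 0 1) := integrable_gaussianPDFReal 0 1
  have hPhi : ∀ t : ℝ, ((gaussianReal 0 1) (Set.Iic t)).toReal
      = ∫ z in Set.Iic t, gaussianPDFReal 0 1 z := by
    intro t
    rw [gaussianReal_apply_eq_integral 0 one_ne_zero,
      ENNReal.toReal_ofReal (setIntegral_nonneg measurableSet_Iic fun z _ => pdf_nonneg z)]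
  set f : ℝ → ℝ := fun z => min K (max k (x * Real.exp (r * T - v / 2 + sv * z))) with hf
  have hf_lb : ∀ z, k ≤ f z := fun z => le_min hkK (le_max_left _ _)
  have hf_ub : ∀ z, f z ≤ K := fun z => min_le_left _ _
  have hf_meas : Measurable f := by fun_prop
  -- convert to volume integral with density
  have hγ : (gaussianReal 0 1 : Measure ℝ)
      = (volume : Measure ℝ).withDensity (fun z => ((gaussianPDFReal 0 1 z).toNNReal : ℝ≥0∞)) := by
    rw [gaussianReal_of_var_ne_zero 0 one_ne_zero]; rfl
  have hmain : ∫ z, f z ∂(gaussianReal 0 1) = ∫ z, gaussianPDFReal 0 1 z * f z := by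
    rw [hγ, integral_withDensity_eq_integral_smul
      ((measurable_gaussianPDFReal 0 1).real_toNNReal) f]
    congr 1
    ext z
    rw [NNReal.smul_def, Real.coe_toNNReal _ (pdf_nonneg z), smul_eq_mul]
  set g0 : ℝ → ℝ := fun z => gaussianPDFReal 0 1 z * f z with hg0
  have hint : Integrable g0 := by
    refine Integrable.mono' (pdf_int.const_mul K) ?_ ?_
    · exact ((measurable_gaussianPDFReal 0 1).mul hf_meas).aestronglyMeasurable
    · refine Filter.Eventually.of_forall fun z => ?_
      rw [Real.norm_eq_abs, abs_of_nonneg (mul_nonneg (pdf_nonneg z)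
        ((hk.le.trans (hf_lb z))))]
      rw [mul_comm K]
      exact mul_le_mul_of_nonneg_left (hf_ub z) (pdf_nonneg z)
  have hsplit : ∫ z, g0 z = (∫ z in Set.Iic A, g0 z)
      + ((∫ z in Set.Ioc A B, g0 z) + (∫ z in Set.Ioi B, g0 z)) := by
    rw [← integral_add_compl measurableSet_Iic hint, Set.compl_Iic]
    congr 1
    rw [← setIntegral_union (Set.Ioc_disjoint_Ioi le_rfl) measurableSet_Ioi
      hint.integrableOn hint.integrableOn, Set.Ioc_union_Ioi_eq_Ioi hAB]
  have h1 : ∫ z in Set.Iic A, g0 z = k * ∫ z in Set.Iic A, gaussianPDFReal 0 1 z := by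
    rw [← integral_const_mul]
    apply setIntegral_congr_fun measurableSet_Iic
    intro z hz
    have h := (key k hk z).2 hz
    simp only [hg0, hf, max_eq_left h, min_eq_right hkK]
    ring
  have h3 : ∫ z in Set.Ioi B, g0 z = K * ∫ z in Set.Iic (-B), gaussianPDFReal 0 1 z := by
    have e1 : ∫ z in Set.Ioi B, g0 z = ∫ z in Set.Ioi B, K * gaussianPDFReal 0 1 z := by
      apply setIntegral_congr_fun measurableSet_Ioi
      intro z hz
      have hgz : K ≤ x * Real.exp (r * T - v / 2 + sv * z) := by
        by_contra h
        exact absurd ((key K hK z).1 (not_le.1 h).le) (not_le.2 hz)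
      simp only [hg0, hf, max_eq_right (hkK.trans hgz), min_eq_left hgz]
      ring
    rw [e1, integral_const_mul]
    congr 1
    have e2 : ∫ z in Set.Iic (-B), gaussianPDFReal 0 1 z
        = ∫ z in Set.Iic (-B), gaussianPDFReal 0 1 (-z) := by
      apply setIntegral_congr_fun measurableSet_Iic
      intro z _
      simp [gaussianPDFReal, neg_sq]
    rw [e2, integral_comp_neg_Iic, neg_neg, ← integral_Ici_eq_integral_Ioi]
  have h2 : ∫ z in Set.Ioc A B, g0 z
      = x * Real.exp (r * T) * ((∫ z in Set.Iic (B - sv), gaussianPDFReal 0 1 z)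
        - (∫ z in Set.Iic (A - sv), gaussianPDFReal 0 1 z)) := by
    have hpt : ∀ z : ℝ, gaussianPDFReal 0 1 z * (x * Real.exp (r * T - v / 2 + sv * z))
        = x * Real.exp (r * T) * gaussianPDFReal 0 1 (z - sv) := by
      intro z
      simp only [gaussianPDFReal, NNReal.coe_one, mul_one, sub_zero]
      have hE : Real.exp (-z ^ 2 / 2) * Real.exp (r * T - v / 2 + sv * z)
          = Real.exp (r * T) * Real.exp (-(z - sv) ^ 2 / 2) := by
        rw [← Real.exp_add, ← Real.exp_add]
        congr 1
        linear_combination hsv2 / 2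
      linear_combination ((Real.sqrt (2 * Real.pi))⁻¹ * x) * hE
    have e1 : ∫ z in Set.Ioc A B, g0 z
        = ∫ z in Set.Ioc A B, x * Real.exp (r * T) * gaussianPDFReal 0 1 (z - sv) := by
      apply setIntegral_congr_fun measurableSet_Ioc
      intro z hz
      have hlo : k ≤ x * Real.exp (r * T - v / 2 + sv * z) := by
        by_contra h
        exact absurd ((key k hk z).1 (not_le.1 h).le) (not_le.2 hz.1)
      have hhi : x * Real.exp (r * T - v / 2 + sv * z) ≤ K := (key K hK z).2 hz.2
      simp only [hg0, hf, max_eq_right hlo, min_eq_right hhi]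
      exact hpt z
    rw [e1, integral_const_mul]
    congr 1
    rw [← intervalIntegral.integral_of_le hAB,
      intervalIntegral.integral_comp_sub_right _ sv,
      ← intervalIntegral.integral_Iic_sub_Iic pdf_int.integrableOn pdf_int.integrableOn]
  rw [hmain]
  show ∫ z, g0 z = _
  rw [hsplit, h1, h2, h3, hPhi, hPhi, hPhi, hPhi]
  have hbk : A - sv = (Real.log (k / x) - r * T + v / 2) / sv - sv := rfl
  have hbK : B - sv = (Real.log (K / x) - r * T + v / 2) / sv - sv := rfl
  ring
end
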